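/- arXiv:math/0406301 — 4 statements merged into one kernel-verified Lean document; each statement's English description precedes it below -/
import Mathlib

section
/- For any n-by-n matrix M with all entries nonzero (over ℚ(λ)), the λ-determinant of M equals the sum over all n-by-n alternating-sign matrices B of λ^(P(B)) (1+λ)^(N(B)) M^B, where M^B = ∏_{i,j} m_{i,j}^{b_{i,j}}, for n ≤ 3. -/
open Finset

/-- The Robbins–Rumsey `λ`-determinant, defined by the condensation recursion. -/
def lamDet {F : Type*} [Field F] (lam : F) : (n : ℕ) → Matrix (Fin n) (Fin n) F → F
  | 0, _ => 1
  | 1, M => M 0 0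
  | (n + 2), M =>
      (lamDet lam (n + 1) (M.submatrix Fin.castSucc Fin.castSucc) *
         lamDet lam (n + 1) (M.submatrix Fin.succ Fin.succ) +
       lam * lamDet lam (n + 1) (M.submatrix Fin.castSucc Fin.succ) *
         lamDet lam (n + 1) (M.submatrix Fin.succ Fin.castSucc)) /
      lamDet lam n (M.submatrix (fun i => i.succ.castSucc) (fun j => j.succ.castSucc))

/-- `B` is an alternating-sign matrix: entries in `{-1,0,1}`, every row and column sums
to `1`, and all partial row and column sums are `0` or `1` (equivalently, the nonzero
entries of each row and column alternate in sign, beginning and ending with `+1`). -/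
def IsASM {n : ℕ} (B : Matrix (Fin n) (Fin n) ℤ) : Prop :=
  (∀ i j, B i j = -1 ∨ B i j = 0 ∨ B i j = 1) ∧
  (∀ i, ∑ j, B i j = 1) ∧ (∀ j, ∑ i, B i j = 1) ∧
  (∀ i k, (∑ j ∈ Finset.univ.filter (· ≤ k), B i j) = 0 ∨
          (∑ j ∈ Finset.univ.filter (· ≤ k), B i j) = 1) ∧
  (∀ j k, (∑ i ∈ Finset.univ.filter (· ≤ k), B i j) = 0 ∨
          (∑ i ∈ Finset.univ.filter (· ≤ k), B i j) = 1)

/-- `N(B)`: the number of `-1` entries of `B`. -/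
def Nstat {n : ℕ} (B : Matrix (Fin n) (Fin n) ℤ) : ℕ :=
  (Finset.univ.filter fun p : Fin n × Fin n => B p.1 p.2 = -1).card

/-- `I(B) = Σ_{i<r, j>s} b_{i,j} b_{r,s}`, the inversion number of `B`. -/
def Istat {n : ℕ} (B : Matrix (Fin n) (Fin n) ℤ) : ℤ :=
  ∑ i : Fin n, ∑ r : Fin n, ∑ j : Fin n, ∑ s : Fin n,
    if i < r ∧ s < j then B i j * B r s else 0

/-- `P(B) = I(B) − N(B)`. -/
def Pstat {n : ℕ} (B : Matrix (Fin n) (Fin n) ℤ) : ℤ :=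
  Istat B - (Nstat B : ℤ)

/-!
For `n ≤ 3` the identity is a finite check. The rows and columns of an alternating-sign matrix
are alternating-sign vectors, so the ASMs of size `n` can be enumerated among the matrices whose
rows are such vectors: there are `1, 1, 2, 7` of them. The condensation recursion gives `det_λ`
in closed form, and for `n = 3` the only ASM with a `-1` entry contributes
`λ (1 + λ) m₀₁ m₁₀ m₁₂ m₂₁ / m₁₁`, which matches the division by the central entry in the
recursion.
-/

def IsASVec {n : ℕ} (v : Fin n → ℤ) : Prop :=
  (∀ j, v j = -1 ∨ v j = 0 ∨ v j = 1) ∧ ∑ j, v j = 1 ∧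
  ∀ k, (∑ j ∈ univ.filter (· ≤ k), v j) = 0 ∨ (∑ j ∈ univ.filter (· ≤ k), v j) = 1

instance {n : ℕ} (v : Fin n → ℤ) : Decidable (IsASVec v) := by
  unfold IsASVec; infer_instance

theorem isASM_iff_rows_cols {n : ℕ} (B : Matrix (Fin n) (Fin n) ℤ) :
    IsASM B ↔ (∀ i, IsASVec fun j => B i j) ∧ ∀ j, IsASVec fun i => B i j := by
  simp only [IsASM, IsASVec, forall_and]
  rw [forall_comm (p := fun (j i : Fin n) => B i j = -1 ∨ B i j = 0 ∨ B i j = 1)]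
  tauto

instance {n : ℕ} (B : Matrix (Fin n) (Fin n) ℤ) : Decidable (IsASM B) :=
  decidable_of_iff _ (isASM_iff_rows_cols B).symm

def asVecs (n : ℕ) : Finset (Fin n → ℤ) :=
  (Fintype.piFinset fun _ => {-1, 0, 1}).filter IsASVec

def asms (n : ℕ) : Finset (Matrix (Fin n) (Fin n) ℤ) :=
  (Fintype.piFinset fun _ => asVecs n).filter IsASM

theorem mem_asVecs {n : ℕ} {v : Fin n → ℤ} : v ∈ asVecs n ↔ IsASVec v := by
  simp only [asVecs, mem_filter, Fintype.mem_piFinset, and_iff_right_iff_imp]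
  intro hv j
  simpa using hv.1 j

theorem mem_asms {n : ℕ} {B : Matrix (Fin n) (Fin n) ℤ} : B ∈ asms n ↔ IsASM B :=
  mem_filter.trans <| and_iff_right_of_imp fun hB =>
    Fintype.mem_piFinset.2 fun i => mem_asVecs.2 (((isASM_iff_rows_cols B).1 hB).1 i)

theorem asms_zero : asms 0 = {!![]} := by
  decide +kernel

theorem asms_one : asms 1 = {!![1]} := by
  decide +kernel

theorem asms_two : asms 2 = {!![1, 0; 0, 1], !![0, 1; 1, 0]} := by
  decide +kernel

theorem asVecs_three : asVecs 3 = {![1, 0, 0], ![0, 1, 0], ![0, 0, 1], ![1, -1, 1]} := by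
  decide +kernel

theorem asms_three :
    asms 3 = {!![1, 0, 0; 0, 1, 0; 0, 0, 1], !![1, 0, 0; 0, 0, 1; 0, 1, 0],
      !![0, 1, 0; 1, 0, 0; 0, 0, 1], !![0, 1, 0; 0, 0, 1; 1, 0, 0],
      !![0, 0, 1; 1, 0, 0; 0, 1, 0], !![0, 0, 1; 0, 1, 0; 1, 0, 0],
      !![0, 1, 0; 1, -1, 1; 0, 1, 0]} := by
  rw [asms, asVecs_three]
  decide +kernel

section Field

variable {F : Type*} [Field F] (lam : F)

def asmWeight {n : ℕ} (M : Matrix (Fin n) (Fin n) F) (B : Matrix (Fin n) (Fin n) ℤ) : F :=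
  lam ^ Pstat B * (1 + lam) ^ Nstat B * ∏ i, ∏ j, M i j ^ B i j

theorem lamDet_two (M : Matrix (Fin 2) (Fin 2) F) :
    lamDet lam 2 M = M 0 0 * M 1 1 + lam * M 0 1 * M 1 0 := by
  simp [lamDet]

theorem lamDet_three (M : Matrix (Fin 3) (Fin 3) F) :
    lamDet lam 3 M =
      ((M 0 0 * M 1 1 + lam * M 0 1 * M 1 0) * (M 1 1 * M 2 2 + lam * M 1 2 * M 2 1) +
        lam * (M 0 1 * M 1 2 + lam * M 0 2 * M 1 1) * (M 1 0 * M 2 1 + lam * M 1 1 * M 2 0)) /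
      M 1 1 := by
  rw [lamDet, lamDet_two, lamDet_two, lamDet_two, lamDet_two]
  rfl

theorem lamDet_zero_eq_sum_asmWeight (M : Matrix (Fin 0) (Fin 0) F) :
    lamDet lam 0 M = ∑ B ∈ asms 0, asmWeight lam M B := by
  simp [asms_zero, asmWeight, Pstat, Istat, Nstat, lamDet]

theorem lamDet_one_eq_sum_asmWeight (M : Matrix (Fin 1) (Fin 1) F) :
    lamDet lam 1 M = ∑ B ∈ asms 1, asmWeight lam M B := by
  simp [asms_one, asmWeight, Pstat, Istat, Nstat, lamDet]

theorem lamDet_two_eq_sum_asmWeight (M : Matrix (Fin 2) (Fin 2) F) :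
    lamDet lam 2 M = ∑ B ∈ asms 2, asmWeight lam M B := by
  rw [lamDet_two, asms_two, sum_insert (by decide), sum_singleton]
  simp only [asmWeight, Fin.prod_univ_two, Pstat, Istat, Nstat, Fin.sum_univ_two,
    card_filter, Fintype.sum_prod_type, Matrix.of_apply, Matrix.cons_val', Matrix.cons_val_zero,
    Matrix.cons_val_one, Matrix.empty_val', Matrix.cons_val_fin_one]
  norm_num [Fin.lt_def]
  ring

theorem sum_asmWeight_asms_three (M : Matrix (Fin 3) (Fin 3) F) :
    ∑ B ∈ asms 3, asmWeight lam M B =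
      M 0 0 * M 1 1 * M 2 2 + lam * M 0 0 * M 1 2 * M 2 1 + lam * M 0 1 * M 1 0 * M 2 2 +
        lam ^ 2 * M 0 1 * M 1 2 * M 2 0 + lam ^ 2 * M 0 2 * M 1 0 * M 2 1 +
        lam ^ 3 * M 0 2 * M 1 1 * M 2 0 +
        lam * (1 + lam) * M 0 1 * M 1 0 * M 1 2 * M 2 1 / M 1 1 := by
  rw [asms_three]
  repeat rw [sum_insert (by decide)]
  simp only [sum_singleton, asmWeight, Fin.prod_univ_three, Pstat, Istat, Nstat, Fin.sum_univ_three,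
    card_filter, Fintype.sum_prod_type, Matrix.of_apply, Matrix.cons_val', Matrix.cons_val_zero,
    Matrix.cons_val_one, Matrix.cons_val_two, Matrix.empty_val', Matrix.cons_val_fin_one]
  norm_num [Fin.lt_def]
  ring

theorem lamDet_three_eq_sum_asmWeight (M : Matrix (Fin 3) (Fin 3) F) (hM : M 1 1 ≠ 0) :
    lamDet lam 3 M = ∑ B ∈ asms 3, asmWeight lam M B := by
  rw [lamDet_three, sum_asmWeight_asms_three]
  field_simp
  ring

end Field

/-- Robbins–Rumsey summation formula: for `n ≤ 3` and any `n×n` matrix `M` over `ℚ(λ)`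
with all entries nonzero, the λ-determinant of `M` equals
`Σ_B λ^(P(B)) (1+λ)^(N(B)) M^B`, the sum ranging over all `n×n` alternating-sign
matrices `B`, with `M^B = Π_{i,j} m_{i,j}^(b_{i,j})`. -/
theorem lamDet_eq_asm_sum (n : ℕ) (hn : n ≤ 3) (M : Matrix (Fin n) (Fin n) (RatFunc ℚ))
    (hM : ∀ i j, M i j ≠ 0) :
    ∃ S : Finset (Matrix (Fin n) (Fin n) ℤ),
      (∀ B, B ∈ S ↔ IsASM B) ∧
      lamDet (RatFunc.X : RatFunc ℚ) n M =
        ∑ B ∈ S, (RatFunc.X : RatFunc ℚ) ^ (Pstat B) * (1 + RatFunc.X) ^ (Nstat B) *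
          ∏ i : Fin n, ∏ j : Fin n, M i j ^ (B i j) := by
  refine ⟨asms n, fun B => mem_asms, ?_⟩
  interval_cases n
  · exact lamDet_zero_eq_sum_asmWeight _ M
  · exact lamDet_one_eq_sum_asmWeight _ M
  · exact lamDet_two_eq_sum_asmWeight _ M
  · exact lamDet_three_eq_sum_asmWeight _ M (hM 1 1)
end

section
/- The number of domino tilings of the 2-by-2 square is 2, the number of domino tilings of the 4-by-4 square is 36, the number of domino tilings of the 6-by-6 square is 6728, and the number of domino tilings of the 8-by-8 square is 12988816. -/
/-!
Tilings are counted by the broken-profile transfer method. In any region, the free cell `v` of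
smallest row-major index must be covered by a domino joining it to the cell on its right or the
cell below it, and removing that domino leaves a region of the same kind: all cells from some
index `i` on, minus those among the next `m` cells that are marked in an `m`-bit mask. The
number of tilings of these regions therefore satisfies a recursion in `(i, mask)`, which the
kernel evaluates one row of `2 ^ m` masks at a time.
-/

/-- Two cells of the `m×m` square grid are adjacent if they differ by one step
horizontally or vertically. -/
def gridAdj {m : ℕ} (a b : Fin m × Fin m) : Prop :=
  (a.1 = b.1 ∧ ((a.2 : ℕ) + 1 = b.2 ∨ (b.2 : ℕ) + 1 = a.2)) ∨
  (a.2 = b.2 ∧ ((a.1 : ℕ) + 1 = b.1 ∨ (b.1 : ℕ) + 1 = a.1))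

instance {m : ℕ} (a b : Fin m × Fin m) : Decidable (gridAdj a b) := by
  unfold gridAdj; infer_instance

/-- The number of domino tilings of the `m×m` square, encoded as the number of
perfect matchings of the grid graph on its cells: fixed-point-free involutions `f`
of the set of cells with `v` and `f v` always adjacent. -/
def squareTilingCount (m : ℕ) : ℕ :=
  (Finset.univ.filter fun f : (Fin m × Fin m) → (Fin m × Fin m) =>
    ∀ v, f (f v) = v ∧ f v ≠ v ∧ gridAdj v (f v)).card

open Finset

section Matching

variable {α : Type*} {r : α → α → Prop}

variable (r) in
def IsPerfectMatchingOn (s : Finset α) (f : α → α) : Prop :=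
  ∀ u, f (f u) = u ∧ (u ∈ s → f u ≠ u ∧ r u (f u)) ∧ (u ∉ s → f u = u)

instance [Fintype α] [DecidableEq α] [DecidableRel r] (s : Finset α) :
    DecidablePred (IsPerfectMatchingOn r s) := fun _ => by
  unfold IsPerfectMatchingOn; infer_instance

variable (r) in
def matchingCount [Fintype α] [DecidableEq α] [DecidableRel r] (s : Finset α) : ℕ :=
  #{f | IsPerfectMatchingOn r s f}

lemma isPerfectMatchingOn_empty_iff {f : α → α} : IsPerfectMatchingOn r ∅ f ↔ f = id := by
  refine ⟨fun hf => funext fun u => (hf u).2.2 (notMem_empty u), ?_⟩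
  rintro rfl u
  simp

@[simp]
lemma matchingCount_empty [Fintype α] [DecidableEq α] [DecidableRel r] :
    matchingCount r (∅ : Finset α) = 1 := by
  simp [matchingCount, isPerfectMatchingOn_empty_iff, filter_eq']

lemma IsPerfectMatchingOn.swap_comp [DecidableEq α] {s : Finset α} {f : α → α}
    (hf : IsPerfectMatchingOn r s f) {v : α} (hv : v ∈ s) :
    IsPerfectMatchingOn r ((s.erase v).erase (f v)) (Equiv.swap v (f v) ∘ f) := by
  intro u
  have hfu := hf u
  have hfv := hf v
  have hfu_eq_v : f u = v ↔ u = f v := ⟨fun e => by rw [← e, hfu.1], fun e => by rw [e, hfv.1]⟩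
  have hfu_eq_fv : f u = f v ↔ u = v := ⟨fun e => by rw [← hfu.1, e, hfv.1], fun e => by rw [e]⟩
  simp only [Function.comp_apply, mem_erase, Equiv.swap_apply_def]
  grind

lemma IsPerfectMatchingOn.swap_comp_of_erase [DecidableEq α] {s : Finset α} {v w : α}
    {g : α → α} (hg : IsPerfectMatchingOn r ((s.erase v).erase w) g) (hv : v ∈ s) (hw : w ∈ s)
    (hvw : v ≠ w) (hr : r v w) (hr' : r w v) :
    IsPerfectMatchingOn r s (Equiv.swap v w ∘ g) := by
  intro u
  have hgu := hg u
  have hgv := (hg v).2.2 (by simp)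
  have hgw := (hg w).2.2 (by simp)
  have hgu_eq_v : g u = v ↔ u = v := ⟨fun e => by rw [← hgu.1, e, hgv], fun e => by rw [e, hgv]⟩
  have hgu_eq_w : g u = w ↔ u = w := ⟨fun e => by rw [← hgu.1, e, hgw], fun e => by rw [e, hgw]⟩
  simp only [Function.comp_apply, mem_erase, Equiv.swap_apply_def] at *
  grind

lemma matchingCount_eq_sum [Fintype α] [DecidableEq α] [DecidableRel r] [Std.Symm r]
    {s : Finset α} {v : α} (hv : v ∈ s) :
    matchingCount r s = ∑ w ∈ s.erase v with r v w, matchingCount r ((s.erase v).erase w) := by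
  have hmaps : ∀ f ∈ ({f | IsPerfectMatchingOn r s f} : Finset (α → α)),
      f v ∈ (s.erase v).filter (r v) := by
    intro f hf
    obtain ⟨hff, hfv, -⟩ := (mem_filter.mp hf).2 v
    obtain ⟨hne, hr⟩ := hfv hv
    refine mem_filter.mpr ⟨mem_erase.mpr ⟨hne, by_contra fun h => hne ?_⟩, hr⟩
    rw [← (mem_filter.mp hf).2 _ |>.2.2 h, hff]
  rw [matchingCount, card_eq_sum_card_fiberwise hmaps]
  refine sum_congr rfl fun w hw => ?_
  obtain ⟨⟨hwv, hws⟩, hvw⟩ := by simpa only [mem_filter, mem_erase] using hw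
  refine card_nbij' (Equiv.swap v w ∘ ·) (Equiv.swap v w ∘ ·) ?_ ?_ ?_ ?_
  · intro f hf
    obtain ⟨hmem, rfl⟩ := mem_filter.mp hf
    exact mem_filter.mpr ⟨mem_univ _, (mem_filter.mp hmem).2.swap_comp hv⟩
  · intro g hg
    replace hg := (mem_filter.mp hg).2
    refine mem_filter.mpr ⟨mem_filter.mpr ⟨mem_univ _, ?_⟩, by simp [(hg v).2.2 (by simp)]⟩
    exact hg.swap_comp_of_erase hv hws (Ne.symm hwv) hvw (symm_of r hvw)
  · intro f _; ext; simp
  · intro f _; ext; simp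

end Matching

lemma eq_and_eq_of_add_mul_eq_add_mul {m a b c d : ℕ} (ha : a < m) (hc : c < m)
    (h : a + m * b = c + m * d) :
    a = c ∧ b = d := by
  have hm : 0 < m := by omega
  obtain ⟨h₁, h₂⟩ := (Nat.div_mod_unique hm).2 ⟨rfl, ha⟩
  obtain ⟨h₃, h₄⟩ := (Nat.div_mod_unique hm).2 ⟨rfl, hc⟩
  rw [h] at h₁ h₂
  exact ⟨h₂.symm.trans h₄, h₁.symm.trans h₃⟩

lemma sum_range_ite_or {M : Type*} [AddCommMonoid M] {n a b : ℕ} {A B : Prop} [Decidable A]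
    [Decidable B] (g : ℕ → M) (ha : A → a < n) (hb : B → b < n) (hab : A → B → a ≠ b) :
    ∑ k ∈ range n, (if (k = a ∧ A) ∨ (k = b ∧ B) then g k else 0) =
      (if A then g a else 0) + (if B then g b else 0) := by
  by_cases hA : A <;> by_cases hB : B <;>
    simp only [hA, hB, and_true, and_false, or_false, false_or, if_true, if_false, zero_add,
      add_zero, sum_ite_eq', mem_range, ha, hb, sum_const_zero]
  rw [sum_eq_add_of_mem a b (mem_range.2 (ha hA)) (mem_range.2 (hb hB)) (hab hA hB)] <;> grind

section Grid

variable {m : ℕ}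

instance : Std.Symm (gridAdj (m := m)) where
  symm _ _ h := by unfold gridAdj at *; tauto

def cellIndex (x : Fin m × Fin m) : ℕ := finProdFinEquiv x

lemma cellIndex_def (x : Fin m × Fin m) : cellIndex x = x.2 + m * x.1 := rfl

lemma cellIndex_injective : Function.Injective (cellIndex (m := m)) :=
  fun _ _ h => finProdFinEquiv.injective (Fin.ext h)

lemma cellIndex_lt (x : Fin m × Fin m) : cellIndex x < m * m := (finProdFinEquiv x).isLt

lemma gridAdj_iff_of_cellIndex_le {a b : Fin m × Fin m} (h : cellIndex a ≤ cellIndex b) :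
    gridAdj a b ↔ (cellIndex b = cellIndex a + 1 ∧ (a.2 : ℕ) + 1 < m) ∨
      (cellIndex b = cellIndex a + m ∧ (a.1 : ℕ) + 1 < m) := by
  obtain ⟨⟨a₁, ha₁⟩, ⟨a₂, ha₂⟩⟩ := a
  obtain ⟨⟨b₁, hb₁⟩, ⟨b₂, hb₂⟩⟩ := b
  simp only [gridAdj, cellIndex_def, Fin.mk.injEq] at h ⊢
  constructor
  · rintro (⟨rfl, rfl | rfl⟩ | ⟨rfl, rfl | rfl⟩) <;> (try rw [Nat.mul_succ] at *) <;> omega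
  · rintro (⟨hi, hlt⟩ | ⟨hi, hlt⟩)
    · have := eq_and_eq_of_add_mul_eq_add_mul (d := a₁) hb₂ hlt (hi.trans (by omega))
      omega
    · have := eq_and_eq_of_add_mul_eq_add_mul (d := a₁ + 1) hb₂ ha₂
        (hi.trans (by rw [Nat.mul_succ]; omega))
      omega

/-- Bit `j` of `w` marks the cell of index `i + j` as already covered. -/
def profileRegion (m i w : ℕ) : Finset (Fin m × Fin m) :=
  {x | i ≤ cellIndex x ∧ w.testBit (cellIndex x - i) = false}

lemma mem_profileRegion {i w : ℕ} {x : Fin m × Fin m} :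
    x ∈ profileRegion m i w ↔ i ≤ cellIndex x ∧ w.testBit (cellIndex x - i) = false := by
  simp [profileRegion]

lemma profileRegion_zero_zero : profileRegion m 0 0 = univ := by
  ext; simp [mem_profileRegion]

lemma profileRegion_eq_empty {i : ℕ} (w : ℕ) (hi : m * m ≤ i) : profileRegion m i w = ∅ := by
  ext x
  simp only [mem_profileRegion, notMem_empty, iff_false, not_and]
  have := cellIndex_lt x
  omega

lemma profileRegion_succ_shiftRight {i w : ℕ} {v : Fin m × Fin m} (hv : cellIndex v = i) :
    profileRegion m (i + 1) (w >>> 1) = (profileRegion m i w).erase v := by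
  ext x
  simp only [mem_erase, mem_profileRegion, Nat.testBit_shiftRight, ← cellIndex_injective.ne_iff]
  constructor
  · rintro ⟨hi, hx⟩
    exact ⟨by omega, by omega, by rwa [show cellIndex x - i = 1 + (cellIndex x - (i + 1)) by omega]⟩
  · rintro ⟨hne, hi, hx⟩
    exact ⟨by omega, by rwa [show 1 + (cellIndex x - (i + 1)) = cellIndex x - i by omega]⟩

lemma profileRegion_erase {i w : ℕ} {u : Fin m × Fin m} (hu : i ≤ cellIndex u) :
    (profileRegion m i w).erase u = profileRegion m i (w ||| 2 ^ (cellIndex u - i)) := by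
  ext x
  simp only [mem_erase, mem_profileRegion, Nat.testBit_or, Nat.testBit_two_pow,
    Bool.or_eq_false_iff, decide_eq_false_iff_not, ← cellIndex_injective.ne_iff]
  constructor
  · rintro ⟨hne, hi, hx⟩
    exact ⟨hi, hx, by omega⟩
  · rintro ⟨hi, hx, hne⟩
    exact ⟨by omega, hi, hx⟩

lemma filter_gridAdj_profileRegion_erase {i w : ℕ} {v : Fin m × Fin m} (hv : cellIndex v = i)
    (hw : w < 2 ^ m) :
    ((profileRegion m i w).erase v).filter (gridAdj v) =
      ({u | (cellIndex u = i + 1 ∧ (v.2 : ℕ) + 1 < m ∧ w.testBit 1 = false) ∨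
        (cellIndex u = i + m ∧ (v.1 : ℕ) + 1 < m)} : Finset _) := by
  have hm := v.2.pos
  have hwm : w.testBit m = false := Nat.testBit_lt_two_pow hw
  ext u
  simp only [mem_filter, mem_univ, true_and, mem_erase, mem_profileRegion,
    ← cellIndex_injective.ne_iff, hv]
  constructor
  · rintro ⟨⟨hne, hi, hx⟩, hadj⟩
    rcases (gridAdj_iff_of_cellIndex_le (hv ▸ hi)).1 hadj with ⟨hu, hlt⟩ | ⟨hu, hlt⟩
    · rw [hv] at hu
      rw [hu, Nat.add_sub_cancel_left] at hx
      exact Or.inl ⟨hu, hlt, hx⟩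
    · exact Or.inr ⟨hv ▸ hu, hlt⟩
  · rintro (⟨hu, hlt, hx⟩ | ⟨hu, hlt⟩)
    · refine ⟨⟨by omega, by omega, by rwa [hu, Nat.add_sub_cancel_left]⟩, ?_⟩
      exact (gridAdj_iff_of_cellIndex_le (by omega)).2 (Or.inl ⟨by omega, hlt⟩)
    · refine ⟨⟨by omega, by omega, by rwa [hu, Nat.add_sub_cancel_left]⟩, ?_⟩
      exact (gridAdj_iff_of_cellIndex_le (by omega)).2 (Or.inr ⟨by omega, hlt⟩)

lemma sum_cells_eq_sum_range {M : Type*} [AddCommMonoid M] (g : ℕ → M) :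
    ∑ x : Fin m × Fin m, g (cellIndex x) = ∑ k ∈ range (m * m), g k :=
  (Fintype.sum_equiv finProdFinEquiv _ (fun k => g k) fun _ => rfl).trans
    (Fin.sum_univ_eq_sum_range g _)

lemma sum_filter_gridAdj_profileRegion_erase {M : Type*} [AddCommMonoid M] {i w : ℕ}
    {v : Fin m × Fin m} (hv : cellIndex v = i) (hw : w < 2 ^ m) (F : ℕ → M) :
    ∑ u ∈ ((profileRegion m i w).erase v).filter (gridAdj v), F (cellIndex u - i) =
      (if (v.2 : ℕ) + 1 < m ∧ w.testBit 1 = false then F 1 else 0) +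
        (if (v.1 : ℕ) + 1 < m then F m else 0) := by
  have hright : (v.2 : ℕ) + 1 < m → i + 1 < m * m := fun h => by
    have := cellIndex_lt (v.1, ⟨v.2 + 1, h⟩)
    simp only [cellIndex_def] at this hv
    omega
  have hdown : (v.1 : ℕ) + 1 < m → i + m < m * m := fun h => by
    have := cellIndex_lt (⟨v.1 + 1, h⟩, v.2)
    simp only [cellIndex_def, Nat.mul_succ] at this hv
    omega
  rw [filter_gridAdj_profileRegion_erase hv hw, sum_filter,
    sum_cells_eq_sum_range fun k => if (k = i + 1 ∧ (v.2 : ℕ) + 1 < m ∧ w.testBit 1 = false) ∨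
      (k = i + m ∧ (v.1 : ℕ) + 1 < m) then F (k - i) else 0,
    sum_range_ite_or _ (fun h => hright h.1) hdown (by omega)]
  simp only [Nat.add_sub_cancel_left]

end Grid

def profileStep (m i : ℕ) (next : ℕ → ℕ) (w : ℕ) : ℕ :=
  if w.testBit 0 then next (w >>> 1)
  else (if i % m + 1 < m ∧ w.testBit 1 = false then next ((w ||| 2 ^ 1) >>> 1) else 0) +
    (if i / m + 1 < m then next ((w ||| 2 ^ m) >>> 1) else 0)

def profileTable (m : ℕ) : ℕ → List ℕ
  | 0 => List.replicate (2 ^ m) 1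
  | k + 1 =>
    (List.range (2 ^ m)).map (profileStep m (m * m - (k + 1)) ((profileTable m k).getD · 0))

lemma matchingCount_profileRegion {m i w : ℕ} (hi : i < m * m) (hw : w < 2 ^ m) :
    matchingCount gridAdj (profileRegion m i w) =
      profileStep m i (fun w' => matchingCount gridAdj (profileRegion m (i + 1) w')) w := by
  set v : Fin m × Fin m := finProdFinEquiv.symm ⟨i, hi⟩
  have hv : cellIndex v = i := by simp [v, cellIndex, Nat.mod_add_div]
  have hv₁ : (v.1 : ℕ) = i / m := by simp [v]
  have hv₂ : (v.2 : ℕ) = i % m := by simp [v]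
  by_cases h0 : w.testBit 0
  · have hvR : v ∉ profileRegion m i w := by simp [mem_profileRegion, hv, h0]
    rw [profileStep, if_pos h0, profileRegion_succ_shiftRight hv, erase_eq_of_notMem hvR]
  have hvR : v ∈ profileRegion m i w := mem_profileRegion.2 ⟨hv.ge, by simpa [hv] using h0⟩
  rw [profileStep, if_neg h0, ← hv₁, ← hv₂, matchingCount_eq_sum hvR,
    ← sum_filter_gridAdj_profileRegion_erase hv hw
      fun j => matchingCount gridAdj (profileRegion m (i + 1) ((w ||| 2 ^ j) >>> 1))]
  refine sum_congr rfl fun u hu => ?_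
  have hiu : i ≤ cellIndex u := (mem_profileRegion.1 (mem_of_mem_erase (mem_filter.1 hu).1)).1
  rw [erase_right_comm, profileRegion_erase hiu, ← profileRegion_succ_shiftRight hv]

lemma shiftRight_or_two_pow_lt {m w j : ℕ} (hw : w < 2 ^ m) (hj : j ≤ m) :
    (w ||| 2 ^ j) >>> 1 < 2 ^ m := by
  have hlt : w ||| 2 ^ j < 2 ^ (m + 1) :=
    Nat.or_lt_two_pow (hw.trans (Nat.pow_lt_pow_right one_lt_two m.lt_succ_self))
      (Nat.pow_lt_pow_right one_lt_two (by omega))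
  rw [Nat.shiftRight_eq_div_pow, pow_one]
  omega

lemma profileStep_congr {m i w : ℕ} {f g : ℕ → ℕ} (hfg : ∀ w' < 2 ^ m, f w' = g w')
    (hw : w < 2 ^ m) : profileStep m i f w = profileStep m i g w := by
  have hshift : w >>> 1 < 2 ^ m := by
    rw [Nat.shiftRight_eq_div_pow]; exact (Nat.div_le_self _ _).trans_lt hw
  unfold profileStep
  rw [hfg _ hshift, hfg _ (shiftRight_or_two_pow_lt hw le_rfl)]
  by_cases h₁ : i % m + 1 < m
  · rw [hfg _ (shiftRight_or_two_pow_lt hw (by omega))]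
  · simp only [h₁, false_and, if_false]

lemma profileTable_getD {m k w : ℕ} (hk : k ≤ m * m) (hw : w < 2 ^ m) :
    (profileTable m k).getD w 0 = matchingCount gridAdj (profileRegion m (m * m - k) w) := by
  induction k generalizing w with
  | zero =>
    rw [Nat.sub_zero, profileRegion_eq_empty w le_rfl, matchingCount_empty]
    simp [profileTable, List.getD_eq_getElem?_getD, hw]
  | succ k ih =>
    rw [profileTable, List.getD_eq_getElem?_getD, List.getElem?_map, List.getElem?_range hw,
      Option.map_some, Option.getD_some, matchingCount_profileRegion (by omega) hw,
      show m * m - (k + 1) + 1 = m * m - k by omega]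
    exact profileStep_congr (fun w' hw' => ih (by omega) hw') hw

lemma squareTilingCount_eq_profileTable (m : ℕ) :
    squareTilingCount m = (profileTable m (m * m)).getD 0 0 := by
  rw [profileTable_getD le_rfl (Nat.two_pow_pos m), Nat.sub_self, profileRegion_zero_zero,
    squareTilingCount, matchingCount]
  congr 1
  ext f
  simp [IsPerfectMatchingOn]

/-- The 2×2 square has 2 domino tilings, the 4×4 square has 36, the 6×6 square has
6728, and the 8×8 square has 12988816. -/
theorem squareTilingCount_values :
    squareTilingCount 2 = 2 ∧ squareTilingCount 4 = 36 ∧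
    squareTilingCount 6 = 6728 ∧ squareTilingCount 8 = 12988816 := by
  simp only [squareTilingCount_eq_profileTable]
  decide +kernel
end

section
/- There is a bijection between domino tilings of the 2n-by-2n square and domino tilings of the Aztec diamond of order 2n in which the n(n−1)/2 dominos in each of the four corners are placed in the unique forced positions (slanting SW–NE in the NW and SE corners, and NW–SE in the SW and NE corners). -/
/-- Two lattice cells are adjacent if they differ by one step horizontally or
vertically. -/
def cellAdj (a b : ℤ × ℤ) : Prop :=
  (a.1 = b.1 ∧ (a.2 = b.2 + 1 ∨ b.2 = a.2 + 1)) ∨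
  (a.2 = b.2 ∧ (a.1 = b.1 + 1 ∨ b.1 = a.1 + 1))

instance (a b : ℤ × ℤ) : Decidable (cellAdj a b) := by unfold cellAdj; infer_instance

/-- The domino tilings of a finite set `S` of cells, encoded as the perfect matchings
of its adjacency graph: fixed-point-free adjacency-respecting involutions of `S`. -/
def tilings (S : Finset (ℤ × ℤ)) : Finset ({x // x ∈ S} → {x // x ∈ S}) :=
  Finset.univ.filter fun f => ∀ v, f (f v) = v ∧ f v ≠ v ∧ cellAdj v.val (f v).val

/-- The cells of the Aztec diamond of order `2n`: `(i,j)` with `1 ≤ i,j ≤ 4n` and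
`|2i−4n−1| + |2j−4n−1| ≤ 4n`. -/
noncomputable def adCells (n : ℕ) : Finset (ℤ × ℤ) :=
  (Finset.Icc ((1 : ℤ), (1 : ℤ)) (4 * (n : ℤ), 4 * (n : ℤ))).filter fun p =>
    |2 * p.1 - (4 * (n : ℤ) + 1)| + |2 * p.2 - (4 * (n : ℤ) + 1)| ≤ 4 * n

/-- The cells of the central `2n×2n` square inside the Aztec diamond of order `2n`. -/
noncomputable def squareCells (n : ℕ) : Finset (ℤ × ℤ) :=
  Finset.Icc ((n : ℤ) + 1, (n : ℤ) + 1) (3 * (n : ℤ), 3 * (n : ℤ))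

/-- For a cell of the Aztec diamond of order `2n` lying outside the central `2n×2n`
square, the partner cell of the unique forced domino covering it (the forced dominoes
run along the staircase corner regions, slanting SW–NE in the NW and SE corners and
NW–SE in the SW and NE corners). -/
def forcedPartner (n : ℕ) (p : ℤ × ℤ) : ℤ × ℤ :=
  if p.1 ≤ n then
    (if Odd (p.1 + p.2) then (p.1, p.2 + 1) else (p.1, p.2 - 1))
  else if 3 * n + 1 ≤ p.1 then
    (if Even (p.1 + p.2) then (p.1, p.2 + 1) else (p.1, p.2 - 1))
  else if p.2 ≤ n then
    (if Odd (p.1 + p.2) then (p.1 + 1, p.2) else (p.1 - 1, p.2))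
  else
    (if Even (p.1 + p.2) then (p.1 + 1, p.2) else (p.1 - 1, p.2))

/-!
The forced dominoes pair the cells of the Aztec diamond outside the square among themselves.
Hence in a tiling that uses them, every square cell is paired with a square cell, so restricting
to the square and extending by the forced dominoes are mutually inverse.
-/

lemma mem_tilings {S : Finset (ℤ × ℤ)} {f : S → S} :
    f ∈ tilings S ↔ ∀ v, f (f v) = v ∧ f v ≠ v ∧ cellAdj v.val (f v).val := by
  simp [tilings]

lemma cellAdj.ne {p q : ℤ × ℤ} (h : cellAdj p q) : q ≠ p := by
  obtain ⟨a, b⟩ := p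
  obtain ⟨c, d⟩ := q
  simp only [cellAdj] at h
  simp only [ne_eq, Prod.mk.injEq]
  omega

structure IsTilingOn (R : Finset (ℤ × ℤ)) (φ : ℤ × ℤ → ℤ × ℤ) : Prop where
  mapsTo : ∀ p ∈ R, φ p ∈ R
  involutive : ∀ p ∈ R, φ (φ p) = p
  adj : ∀ p ∈ R, cellAdj p (φ p)

def forcedTilings (S T : Finset (ℤ × ℤ)) (φ : ℤ × ℤ → ℤ × ℤ) : Finset (T → T) :=
  (tilings T).filter fun g => ∀ v, v.val ∉ S → (g v).val = φ v.val

section Gluing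

variable {S T : Finset (ℤ × ℤ)} {φ : ℤ × ℤ → ℤ × ℤ}

lemma IsTilingOn.mem_sdiff (hφ : IsTilingOn (T \ S) φ) {p : ℤ × ℤ} (hT : p ∈ T)
    (hS : p ∉ S) : φ p ∈ T ∧ φ p ∉ S :=
  Finset.mem_sdiff.1 (hφ.mapsTo p (Finset.mem_sdiff.2 ⟨hT, hS⟩))

lemma mem_of_mem_forcedTilings (hφ : IsTilingOn (T \ S) φ) {g : T → T}
    (hg : g ∈ forcedTilings S T φ) {v : T} (hv : v.val ∈ S) : (g v).val ∈ S := by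
  rw [forcedTilings, Finset.mem_filter, mem_tilings] at hg
  by_contra h
  have hgg : (g (g v)).val ∉ S := hg.2 (g v) h ▸ (hφ.mem_sdiff (g v).2 h).2
  rw [(hg.1 v).1] at hgg
  exact hgg hv

variable (hST : S ⊆ T) (hφ : IsTilingOn (T \ S) φ)

def extendTiling (f : S → S) (v : T) : T :=
  if h : v.val ∈ S then ⟨f ⟨v, h⟩, hST (f ⟨v, h⟩).2⟩
  else ⟨φ v, (hφ.mem_sdiff v.2 h).1⟩

def restrictTiling (g : T → T) (hg : g ∈ forcedTilings S T φ) (v : S) : S :=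
  ⟨g ⟨v, hST v.2⟩, mem_of_mem_forcedTilings hφ hg v.2⟩

variable {hST hφ}

lemma extendTiling_of_mem {f : S → S} {v : T} (hv : v.val ∈ S) :
    (extendTiling hST hφ f v).val = f ⟨v, hv⟩ := by
  simp [extendTiling, hv]

lemma extendTiling_of_notMem {f : S → S} {v : T} (hv : v.val ∉ S) :
    (extendTiling hST hφ f v).val = φ v := by
  simp [extendTiling, hv]

lemma extendTiling_mem_forcedTilings {f : S → S} (hf : f ∈ tilings S) :
    extendTiling hST hφ f ∈ forcedTilings S T φ := by
  rw [mem_tilings] at hf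
  refine Finset.mem_filter.2
    ⟨mem_tilings.2 fun v => ?_, fun v hv => extendTiling_of_notMem hv⟩
  by_cases hv : v.val ∈ S
  · obtain ⟨hff, -, hadj⟩ := hf ⟨v, hv⟩
    have hfv := extendTiling_of_mem (hST := hST) (hφ := hφ) (f := f) hv
    refine ⟨Subtype.ext ?_, fun h => ?_, hfv ▸ hadj⟩
    · rw [extendTiling_of_mem (hfv ▸ (f ⟨v, hv⟩).2)]
      simp [hfv, hff]
    · exact hadj.ne (hfv ▸ congrArg Subtype.val h)
  · have hfv := extendTiling_of_notMem (hST := hST) (hφ := hφ) (f := f) hv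
    have hp : v.val ∈ T \ S := Finset.mem_sdiff.2 ⟨v.2, hv⟩
    refine ⟨Subtype.ext ?_, fun h => ?_, hfv ▸ hφ.adj _ hp⟩
    · rw [extendTiling_of_notMem (hfv ▸ (hφ.mem_sdiff v.2 hv).2), hfv, hφ.involutive _ hp]
    · exact (hφ.adj _ hp).ne (hfv ▸ congrArg Subtype.val h)

lemma restrictTiling_mem_tilings {g : T → T} (hg : g ∈ forcedTilings S T φ) :
    restrictTiling hST hφ g hg ∈ tilings S := by
  have hgT := mem_tilings.1 (Finset.mem_filter.1 hg).1
  refine mem_tilings.2 fun v => ⟨Subtype.ext ?_, fun h => ?_, (hgT ⟨v, hST v.2⟩).2.2⟩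
  · simp [restrictTiling, (hgT _).1]
  · exact (hgT ⟨v, hST v.2⟩).2.1 (Subtype.ext (congrArg Subtype.val h :))

variable (hST hφ) in
def tilingsEquivForcedTilings : {f // f ∈ tilings S} ≃ {g // g ∈ forcedTilings S T φ} where
  toFun f := ⟨extendTiling hST hφ f, extendTiling_mem_forcedTilings f.2⟩
  invFun g := ⟨restrictTiling hST hφ g g.2, restrictTiling_mem_tilings g.2⟩
  left_inv f := by
    ext v : 3
    exact extendTiling_of_mem (v := ⟨v, hST v.2⟩) v.2
  right_inv g := by
    ext v : 3
    by_cases hv : v.val ∈ S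
    · rw [extendTiling_of_mem hv]
      rfl
    · rw [extendTiling_of_notMem hv, (Finset.mem_filter.1 g.2).2 v hv]

end Gluing

lemma mem_adCells {n : ℕ} {a b : ℤ} :
    (a, b) ∈ adCells n ↔ 1 ≤ a ∧ 1 ≤ b ∧ a ≤ 4 * n ∧ b ≤ 4 * n ∧
      ((2 * a - (4 * n + 1)).natAbs : ℤ) + (2 * b - (4 * n + 1)).natAbs ≤ 4 * n := by
  simp only [adCells, Finset.mem_filter, Finset.mem_Icc, Prod.mk_le_mk, Int.abs_eq_natAbs,
    and_assoc]

lemma mem_squareCells {n : ℕ} {a b : ℤ} :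
    (a, b) ∈ squareCells n ↔ n + 1 ≤ a ∧ n + 1 ≤ b ∧ a ≤ 3 * n ∧ b ≤ 3 * n := by
  simp [squareCells, and_assoc]

lemma squareCells_subset_adCells (n : ℕ) : squareCells n ⊆ adCells n := by
  rintro ⟨a, b⟩ h
  rw [mem_squareCells] at h
  rw [mem_adCells]
  omega

lemma forcedPartner_eq (n : ℕ) (a b : ℤ) :
    forcedPartner n (a, b) =
      if a ≤ n then (if (a + b) % 2 = 1 then (a, b + 1) else (a, b - 1))
      else if 3 * n + 1 ≤ a then (if (a + b) % 2 = 0 then (a, b + 1) else (a, b - 1))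
      else if b ≤ n then (if (a + b) % 2 = 1 then (a + 1, b) else (a - 1, b))
      else (if (a + b) % 2 = 0 then (a + 1, b) else (a - 1, b)) := by
  simp only [forcedPartner, Int.odd_iff, Int.even_iff]

lemma forcedPartner_isTilingOn (n : ℕ) :
    IsTilingOn (adCells n \ squareCells n) (forcedPartner n) := by
  refine ⟨?_, ?_, ?_⟩ <;> rintro ⟨a, b⟩ h <;>
    rw [Finset.mem_sdiff, mem_adCells, mem_squareCells] at h
  · rw [forcedPartner_eq, Finset.mem_sdiff]
    split_ifs <;> rw [mem_adCells, mem_squareCells] <;> omega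
  · rw [forcedPartner_eq n a b]
    split_ifs <;> rw [forcedPartner_eq] <;> split_ifs <;>
      simp only [Prod.mk.injEq, true_and, and_true] <;> omega
  · rw [forcedPartner_eq]
    split_ifs <;> simp [cellAdj]

theorem square_tilings_equiv_forced_aztec_tilings_general (n : ℕ) :
    Nonempty
      ({f // f ∈ tilings (squareCells n)} ≃
       {f // f ∈ (tilings (adCells n)).filter fun f =>
          ∀ v, v.val ∉ squareCells n → (f v).val = forcedPartner n v.val}) :=
  ⟨tilingsEquivForcedTilings (squareCells_subset_adCells n) (forcedPartner_isTilingOn n)⟩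

/-- There is a bijection between domino tilings of the `2n×2n` square and domino
tilings of the Aztec diamond of order `2n` in which every cell outside the central
square is covered by its unique forced domino. -/
theorem square_tilings_equiv_forced_aztec_tilings (n : ℕ) (hn : 1 ≤ n) :
    Nonempty
      ({f // f ∈ tilings (squareCells n)} ≃
       {f // f ∈ (tilings (adCells n)).filter fun f =>
          ∀ v, v.val ∉ squareCells n → (f v).val = forcedPartner n v.val}) :=
  square_tilings_equiv_forced_aztec_tilings_general n
end

section
/- For any n-by-n alternating-sign matrix B, the statistic I(B) = Σ_{i<r, j>s} b_{i,j} b_{r,s} satisfies I(B) ≥ N(B), where N(B) is the number of −1 entries of B; equivalently, P(B) = I(B) − N(B) is non-negative. -/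
/-- Auxiliary: for a `{-1,0,1}`-vector summing to `1`, the sum over strictly ordered
pairs of products is minus the number of `-1` entries. -/
lemma diag_col {n : ℕ} (x : Fin n → ℤ) (h1 : ∀ i, x i = -1 ∨ x i = 0 ∨ x i = 1)
    (hs : ∑ i, x i = 1) :
    ∑ i : Fin n, ∑ r : Fin n, (if i < r then x i * x r else 0)
      = -(∑ i : Fin n, if x i = -1 then (1 : ℤ) else 0) := by
  have key : ∀ i r : Fin n, x i * x r =
      (if i < r then x i * x r else 0) + (if r < i then x i * x r else 0) +
      (if i = r then x i * x r else 0) := by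
    intro i r
    rcases lt_trichotomy i r with h | h | h
    · simp [h, lt_asymm h, h.ne]
    · simp [h]
    · simp [h, lt_asymm h, h.ne']
  have expand : (∑ i : Fin n, x i) * (∑ r : Fin n, x r) = ∑ i : Fin n, ∑ r : Fin n, x i * x r :=
    Finset.sum_mul_sum _ _ _ _
  have hswap : (∑ i : Fin n, ∑ r : Fin n, (if r < i then x i * x r else 0))
      = ∑ i : Fin n, ∑ r : Fin n, (if i < r then x i * x r else 0) := by
    rw [Finset.sum_comm]
    refine Finset.sum_congr rfl fun a _ => Finset.sum_congr rfl fun b _ => ?_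
    rw [mul_comm]
  have hdiag : (∑ i : Fin n, ∑ r : Fin n, (if i = r then x i * x r else 0))
      = ∑ i : Fin n, x i * x i := by
    refine Finset.sum_congr rfl fun i _ => ?_
    simp
  have hsq : (∑ i : Fin n, x i * x i)
      = (∑ i : Fin n, x i) + 2 * (∑ i : Fin n, if x i = -1 then (1 : ℤ) else 0) := by
    rw [Finset.mul_sum, ← Finset.sum_add_distrib]
    refine Finset.sum_congr rfl fun i _ => ?_
    rcases h1 i with h | h | h <;> simp [h]
  have h2 : (∑ i : Fin n, ∑ r : Fin n, x i * x r)
      = 2 * (∑ i : Fin n, ∑ r : Fin n, (if i < r then x i * x r else 0))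
        + (∑ i : Fin n, x i * x i) := by
    calc (∑ i : Fin n, ∑ r : Fin n, x i * x r)
        = ∑ i : Fin n, ∑ r : Fin n, ((if i < r then x i * x r else 0)
            + (if r < i then x i * x r else 0) + (if i = r then x i * x r else 0)) := by
          exact Finset.sum_congr rfl fun i _ => Finset.sum_congr rfl fun r _ => key i r
      _ = (∑ i : Fin n, ∑ r : Fin n, (if i < r then x i * x r else 0))
            + (∑ i : Fin n, ∑ r : Fin n, (if r < i then x i * x r else 0))
            + (∑ i : Fin n, ∑ r : Fin n, (if i = r then x i * x r else 0)) := by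
          simp [Finset.sum_add_distrib]
      _ = 2 * (∑ i : Fin n, ∑ r : Fin n, (if i < r then x i * x r else 0))
            + (∑ i : Fin n, x i * x i) := by rw [hswap, hdiag]; ring
  rw [hs] at expand hsq
  rw [hsq] at h2
  rw [← expand] at h2
  linarith

/-- For any `n×n` alternating-sign matrix `B`, `I(B) ≥ N(B)`; equivalently,
`P(B) = I(B) − N(B)` is non-negative. -/
theorem Istat_ge_Nstat (n : ℕ) (B : Matrix (Fin n) (Fin n) ℤ) (hB : IsASM B) :
    (Nstat B : ℤ) ≤ Istat B := by
  obtain ⟨h01, hrow, hcol, hrowp, hcolp⟩ := hB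
  -- N as a double sum
  have hN : (Nstat B : ℤ) = ∑ i : Fin n, ∑ j : Fin n, if B i j = -1 then (1 : ℤ) else 0 := by
    rw [Nstat, Finset.card_filter]
    push_cast
    rw [Fintype.sum_prod_type]
  -- the diagonal (equal-column) part
  have hT : (∑ j : Fin n, ∑ i : Fin n, ∑ r : Fin n, (if i < r then B i j * B r j else 0))
      = -(Nstat B : ℤ) := by
    have : ∀ j : Fin n, (∑ i : Fin n, ∑ r : Fin n, (if i < r then B i j * B r j else 0))
        = -(∑ i : Fin n, if B i j = -1 then (1 : ℤ) else 0) := fun j =>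
      diag_col (fun i => B i j) (fun i => h01 i j) (hcol j)
    rw [Finset.sum_congr rfl fun j _ => this j, Finset.sum_neg_distrib, hN,
      Finset.sum_comm]
  -- nonnegativity of partial sums
  have hColNN : ∀ r j : Fin n, 0 ≤ ∑ i : Fin n, (if i < r then B i j else 0) := by
    intro r j
    rcases Nat.eq_zero_or_pos r.val with h0 | hpos
    · have : ∀ i : Fin n, ¬ i < r := by
        intro i hi; rw [Fin.lt_def, h0] at hi; omega
      simp [this]
    · have hkn : r.val - 1 < n := by omega
      have he : (∑ i : Fin n, if i < r then B i j else 0)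
          = ∑ i ∈ Finset.univ.filter (· ≤ (⟨r.val - 1, hkn⟩ : Fin n)), B i j := by
        rw [Finset.sum_filter]
        refine Finset.sum_congr rfl fun i _ => ?_
        have : (i < r) ↔ (i ≤ (⟨r.val - 1, hkn⟩ : Fin n)) := by
          rw [Fin.lt_def, Fin.le_def]; simp; omega
        simp only [this]
      rcases hcolp j ⟨r.val - 1, hkn⟩ with h | h <;> rw [he, h] <;> norm_num
  have hRowNN : ∀ r j : Fin n, 0 ≤ ∑ s : Fin n, (if s ≤ j then B r s else 0) := by
    intro r j
    rw [← Finset.sum_filter]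
    rcases hrowp r j with h | h <;> rw [h] <;> norm_num
  -- the big nonnegative sum
  set S : ℤ := ∑ r : Fin n, ∑ j : Fin n, ∑ i : Fin n, ∑ s : Fin n,
      (if i < r ∧ s ≤ j then B i j * B r s else 0) with hSdef
  have hSprod : S = ∑ r : Fin n, ∑ j : Fin n,
      (∑ i : Fin n, (if i < r then B i j else 0)) * (∑ s : Fin n, (if s ≤ j then B r s else 0)) := by
    refine Finset.sum_congr rfl fun r _ => Finset.sum_congr rfl fun j _ => ?_
    rw [Finset.sum_mul_sum]
    refine Finset.sum_congr rfl fun i _ => Finset.sum_congr rfl fun s _ => ?_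
    rcases em (i < r) with h | h <;> rcases em (s ≤ j) with h' | h' <;> simp [h, h']
  have hSnn : 0 ≤ S := by
    rw [hSprod]
    refine Finset.sum_nonneg fun r _ => Finset.sum_nonneg fun j _ => ?_
    exact mul_nonneg (hColNN r j) (hRowNN r j)
  -- split S into the Istat part and the diagonal part
  have hsplit : S = Istat B
      + (∑ j : Fin n, ∑ i : Fin n, ∑ r : Fin n, (if i < r then B i j * B r j else 0)) := by
    have hterm : ∀ r j i s : Fin n, (if i < r ∧ s ≤ j then B i j * B r s else 0)
        = (if i < r ∧ s < j then B i j * B r s else 0)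
          + (if s = j then (if i < r then B i j * B r s else 0) else 0) := by
      intro r j i s
      rcases em (i < r) with h | h
      · rcases lt_trichotomy s j with h' | h' | h'
        · simp [h, h', h'.le, h'.ne]
        · simp [h, h', lt_irrefl]
        · simp [h, h'.ne', lt_asymm h', not_le.mpr h']
      · simp [h]
    have : S = (∑ r : Fin n, ∑ j : Fin n, ∑ i : Fin n, ∑ s : Fin n,
          (if i < r ∧ s < j then B i j * B r s else 0))
        + (∑ r : Fin n, ∑ j : Fin n, ∑ i : Fin n, ∑ s : Fin n,
          (if s = j then (if i < r then B i j * B r s else 0) else 0)) := by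
      rw [hSdef, ← Finset.sum_add_distrib]
      refine Finset.sum_congr rfl fun r _ => ?_
      rw [← Finset.sum_add_distrib]
      refine Finset.sum_congr rfl fun j _ => ?_
      rw [← Finset.sum_add_distrib]
      refine Finset.sum_congr rfl fun i _ => ?_
      rw [← Finset.sum_add_distrib]
      exact Finset.sum_congr rfl fun s _ => hterm r j i s
    rw [this]
    congr 1
    · -- reorder indices to match Istat
      rw [Istat]
      calc (∑ r : Fin n, ∑ j : Fin n, ∑ i : Fin n, ∑ s : Fin n,
            (if i < r ∧ s < j then B i j * B r s else 0))
          = ∑ r : Fin n, ∑ i : Fin n, ∑ j : Fin n, ∑ s : Fin n,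
            (if i < r ∧ s < j then B i j * B r s else 0) :=
            Finset.sum_congr rfl fun r _ => Finset.sum_comm

        _ = ∑ i : Fin n, ∑ r : Fin n, ∑ j : Fin n, ∑ s : Fin n,
            (if i < r ∧ s < j then B i j * B r s else 0) := Finset.sum_comm

    · -- collapse the s = j sum
      have hcoll : ∀ r j i : Fin n, (∑ s : Fin n,
          (if s = j then (if i < r then B i j * B r s else 0) else 0))
          = (if i < r then B i j * B r j else 0) := by
        intro r j i
        rw [Finset.sum_ite_eq' Finset.univ j fun s => (if i < r then B i j * B r s else 0)]
        simp
      calc (∑ r : Fin n, ∑ j : Fin n, ∑ i : Fin n, ∑ s : Fin n,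
            (if s = j then (if i < r then B i j * B r s else 0) else 0))
          = ∑ r : Fin n, ∑ j : Fin n, ∑ i : Fin n, (if i < r then B i j * B r j else 0) := by
            exact Finset.sum_congr rfl fun r _ => Finset.sum_congr rfl fun j _ =>
              Finset.sum_congr rfl fun i _ => hcoll r j i
        _ = ∑ j : Fin n, ∑ r : Fin n, ∑ i : Fin n, (if i < r then B i j * B r j else 0) :=
            Finset.sum_comm

        _ = ∑ j : Fin n, ∑ i : Fin n, ∑ r : Fin n, (if i < r then B i j * B r j else 0) :=
            Finset.sum_congr rfl fun j _ => Finset.sum_comm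

  rw [hT] at hsplit
  linarith
end
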